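/- The M'₄ interpolation kernel satisfies the partition of unity property on the integer lattice: for every x ∈ ℝ, the sum over all integers k of M'₄(x - k) equals 1. -/

import Mathlib

noncomputable def M4 (ρ : ℝ) : ℝ :=
  if |ρ| < 1 then 1 - (5 / 2) * ρ ^ 2 + (3 / 2) * |ρ| ^ 3
  else if |ρ| < 2 then (1 / 2) * (2 - |ρ|) ^ 2 * (1 - |ρ|)
  else 0

/-! Only the four integers `k` with `|x - k| < 2` contribute, and after translating `x` into
`[0, 1)` the four cubic pieces of `M4` sum to `1` identically. -/

lemma M4_eq_zero_of_two_le_abs {ρ : ℝ} (h : 2 ≤ |ρ|) : M4 ρ = 0 := by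
  rw [M4, if_neg (by linarith), if_neg (by linarith)]

lemma M4_of_abs_le_one {ρ : ℝ} (h : |ρ| ≤ 1) :
    M4 ρ = 1 - (5 / 2) * |ρ| ^ 2 + (3 / 2) * |ρ| ^ 3 := by
  rcases h.lt_or_eq with h | h
  · rw [M4, if_pos h, sq_abs]
  · rw [M4, if_neg (not_lt.2 h.ge), if_pos (by linarith), h]
    norm_num

lemma M4_of_one_le_abs_of_abs_le_two {ρ : ℝ} (h₁ : 1 ≤ |ρ|) (h₂ : |ρ| ≤ 2) :
    M4 ρ = (1 / 2) * (2 - |ρ|) ^ 2 * (1 - |ρ|) := by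
  rcases h₂.lt_or_eq with h₂ | h₂
  · rw [M4, if_neg (not_lt.2 h₁), if_pos h₂]
  · rw [M4_eq_zero_of_two_le_abs h₂.ge, h₂]
    norm_num

lemma M4_shifts_sum_eq_one {t : ℝ} (h₀ : 0 ≤ t) (h₁ : t < 1) :
    M4 (t + 1) + M4 t + M4 (t - 1) + M4 (t - 2) = 1 := by
  have e₁ : |t + 1| = t + 1 := abs_of_nonneg (by linarith)
  have e₂ : |t| = t := abs_of_nonneg h₀
  have e₃ : |t - 1| = 1 - t := by rw [abs_of_nonpos (by linarith)]; ring
  have e₄ : |t - 2| = 2 - t := by rw [abs_of_nonpos (by linarith)]; ring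
  rw [M4_of_one_le_abs_of_abs_le_two (by linarith) (by linarith),
    M4_of_abs_le_one (by linarith), M4_of_abs_le_one (by linarith),
    M4_of_one_le_abs_of_abs_le_two (by linarith) (by linarith), e₁, e₂, e₃, e₄]
  ring

section Lattice

variable {α : Type*} [AddCommMonoid α] [TopologicalSpace α]

lemma tsum_int_sub_eq_tsum_fract_sub (f : ℝ → α) (x : ℝ) :
    ∑' k : ℤ, f (x - k) = ∑' k : ℤ, f (Int.fract x - k) := by
  refine ((Equiv.addRight ⌊x⌋).tsum_eq _).symm.trans (tsum_congr fun k ↦ ?_)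
  rw [Equiv.coe_addRight, Int.cast_add, Int.fract]
  congr 1
  ring

lemma tsum_int_sub_eq_of_eq_zero_of_two_le_abs {f : ℝ → α} (hf : ∀ ρ, 2 ≤ |ρ| → f ρ = 0)
    {t : ℝ} (h₀ : 0 ≤ t) (h₁ : t < 1) :
    ∑' k : ℤ, f (t - k) = f (t + 1) + f t + f (t - 1) + f (t - 2) := by
  have hzero : ∀ k ∉ ({-1, 0, 1, 2} : Finset ℤ), f (t - k) = 0 := by
    intro k hk
    simp only [Finset.mem_insert, Finset.mem_singleton] at hk
    apply hf
    rcases (show k ≤ -2 ∨ 3 ≤ k by omega) with hk | hk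
    · have : (k : ℝ) ≤ -2 := by exact_mod_cast hk
      rw [abs_of_nonneg (by linarith)]; linarith
    · have : (3 : ℝ) ≤ k := by exact_mod_cast hk
      rw [abs_of_nonpos (by linarith)]; linarith
  rw [tsum_eq_sum hzero]
  simp only [Int.reduceNeg, Finset.mem_insert, neg_eq_zero, one_ne_zero, reduceCtorEq,
    Finset.mem_singleton, or_self, not_false_eq_true, Finset.sum_insert, Int.cast_neg, Int.cast_one,
    sub_neg_eq_add, zero_ne_one, OfNat.zero_ne_ofNat, Int.cast_zero, sub_zero,
    OfNat.one_ne_ofNat, Finset.sum_singleton, Int.cast_ofNat]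
  abel

end Lattice

/-- The M'₄ kernel satisfies the partition of unity property on the integer lattice. -/
theorem M4_partition_of_unity (x : ℝ) : ∑' k : ℤ, M4 (x - (k : ℝ)) = 1 := by
  rw [tsum_int_sub_eq_tsum_fract_sub,
    tsum_int_sub_eq_of_eq_zero_of_two_le_abs (fun _ ↦ M4_eq_zero_of_two_le_abs)
      (Int.fract_nonneg x) (Int.fract_lt_one x)]
  exact M4_shifts_sum_eq_one (Int.fract_nonneg x) (Int.fract_lt_one x)
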